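/- Let G₁ be a simple graph on a finite vertex set V, let e* be an unordered pair of distinct vertices of V that is not an edge of G₁, and let G₂ be the graph whose edge set is the edge set of G₁ together with e*. Let π be an injective ranking assigning distinct real values to all unordered pairs of distinct vertices of V, and let M₁ = M_π(G₁) and M₂ = M_π(G₂) be the corresponding greedy matchings. If e* ∈ M₂, then e* belongs to the symmetric difference M₁ ⊕ M₂, and in the graph H on vertex set V whose edge set is M₁ ⊕ M₂, every edge of H lies in the connected component of H containing the endpoints of e*; that is, H has exactly one connected component containing edges. -/

import Mathlib

/-!
Every edge `e ≠ e*` of `M₁ ∆ M₂` has a neighbouring edge of `M₁ ∆ M₂` of smaller rank: if,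
say, `e ∈ M₁ \ M₂`, then `e` is an edge of `G₂` rejected by the greedy rule, so some
lower-ranked adjacent edge `e'` lies in `M₂`; and `e'` is not in `M₁`, since `e ∈ M₁` blocks
it there. Descending along these edges, which must stop since there are finitely many, ends
at `e*`, so every edge of `M₁ ∆ M₂` is joined to `e*` inside `M₁ ∆ M₂`.
-/

/-- `M` is the greedy matching of the graph `G` with respect to the ranking `π`:
an edge `e` of `G` belongs to `M` iff no edge `e'` of `G` sharing an endpoint with `e`
and of strictly smaller rank belongs to `M`. -/
def IsGreedyMatching {V : Type*} (G : SimpleGraph V) (π : Sym2 V → ℝ)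
    (M : Set (Sym2 V)) : Prop :=
  ∀ e : Sym2 V, e ∈ M ↔ e ∈ G.edgeSet ∧
    ∀ e' ∈ G.edgeSet, (∃ v, v ∈ e ∧ v ∈ e') → π e' < π e → e' ∉ M

namespace IsGreedyMatching

variable {V : Type*} {G H : SimpleGraph V} {π : Sym2 V → ℝ} {M N : Set (Sym2 V)} {e : Sym2 V}

theorem subset_edgeSet (hM : IsGreedyMatching G π M) : M ⊆ G.edgeSet :=
  fun e he => ((hM e).1 he).1

theorem notMem_of_adj_of_lt (hM : IsGreedyMatching G π M) (he : e ∈ M) {e' : Sym2 V}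
    (hshare : ∃ v, v ∈ e ∧ v ∈ e') (hlt : π e' < π e) : e' ∉ M :=
  fun he' => ((hM e).1 he).2 e' (hM.subset_edgeSet he') hshare hlt he'

theorem exists_adj_lt_of_notMem (hM : IsGreedyMatching G π M) (heG : e ∈ G.edgeSet)
    (heM : e ∉ M) : ∃ e' ∈ M, (∃ v, v ∈ e ∧ v ∈ e') ∧ π e' < π e := by
  by_contra! h
  exact heM ((hM e).2 ⟨heG, fun e' _ hshare hlt he' => (h e' he' hshare).not_gt hlt⟩)

theorem exists_adj_lt_mem_diff (hM : IsGreedyMatching G π M) (hN : IsGreedyMatching H π N)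
    (heM : e ∈ M) (heN : e ∉ N) (heH : e ∈ H.edgeSet) :
    ∃ e' ∈ N \ M, (∃ v, v ∈ e ∧ v ∈ e') ∧ π e' < π e := by
  obtain ⟨e', he'N, hshare, hlt⟩ := hN.exists_adj_lt_of_notMem heH heN
  exact ⟨e', ⟨he'N, hM.notMem_of_adj_of_lt heM hshare hlt⟩, hshare, hlt⟩

end IsGreedyMatching

namespace SimpleGraph

variable {V : Type*} {D : Set (Sym2 V)}

theorem fromEdgeSet_reachable_of_mem {e : Sym2 V} (he : e ∈ D) {v w : V} (hv : v ∈ e)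
    (hw : w ∈ e) : (fromEdgeSet D).Reachable v w := by
  by_cases hvw : v = w
  · exact hvw ▸ Reachable.refl v
  · rw [(Sym2.mem_and_mem_iff hvw).1 ⟨hv, hw⟩] at he
    exact Adj.reachable ((fromEdgeSet_adj D).2 ⟨he, hvw⟩)

theorem fromEdgeSet_reachable_of_forall_exists_adj_lt [Finite V] {β : Type*} [Preorder β]
    (f : Sym2 V → β) {e₀ : Sym2 V} (he₀ : e₀ ∈ D) {a : V} (ha : a ∈ e₀)
    (hdesc : ∀ e ∈ D, e ≠ e₀ → ∃ e' ∈ D, (∃ v, v ∈ e ∧ v ∈ e') ∧ f e' < f e) :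
    ∀ e ∈ D, ∀ v ∈ e, (fromEdgeSet D).Reachable v a := by
  intro e
  induction e using (Finite.wellFounded_of_trans_of_irrefl (InvImage (· < ·) f)).induction with
  | _ e ih =>
    intro he v hv
    by_cases he₀' : e = e₀
    · subst he₀'
      exact fromEdgeSet_reachable_of_mem he hv ha
    · obtain ⟨e', he', ⟨w, hwe, hwe'⟩, hlt⟩ := hdesc e he he₀'
      exact (fromEdgeSet_reachable_of_mem he hv hwe).trans (ih e' hlt he' w hwe')

end SimpleGraph

theorem greedyMatching_symmDiff_single_component_general {V : Type*} [Fintype V]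
    (G₁ G₂ : SimpleGraph V) (a b : V)
    (hne : s(a, b) ∉ G₁.edgeSet)
    (hG₂ : G₂.edgeSet = insert s(a, b) G₁.edgeSet)
    (π : Sym2 V → ℝ)
    (M₁ M₂ : Set (Sym2 V))
    (hM₁ : IsGreedyMatching G₁ π M₁) (hM₂ : IsGreedyMatching G₂ π M₂)
    (hstar : s(a, b) ∈ M₂) :
    s(a, b) ∈ symmDiff M₁ M₂ ∧
      ∀ e ∈ symmDiff M₁ M₂, ∀ v ∈ e,
        (SimpleGraph.fromEdgeSet (symmDiff M₁ M₂)).Reachable v a := by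
  have hstar_mem : s(a, b) ∈ symmDiff M₁ M₂ :=
    Set.mem_symmDiff.2 (Or.inr ⟨hstar, fun h => hne (hM₁.subset_edgeSet h)⟩)
  refine ⟨hstar_mem, SimpleGraph.fromEdgeSet_reachable_of_forall_exists_adj_lt π hstar_mem
    (Sym2.mem_mk_left a b) fun e he he_ne => ?_⟩
  rcases Set.mem_symmDiff.1 he with ⟨he₁, he₂⟩ | ⟨he₂, he₁⟩
  · have heG₂ : e ∈ G₂.edgeSet := hG₂ ▸ Set.mem_insert_of_mem _ (hM₁.subset_edgeSet he₁)
    obtain ⟨e', he', hrest⟩ := hM₁.exists_adj_lt_mem_diff hM₂ he₁ he₂ heG₂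
    exact ⟨e', Set.mem_symmDiff.2 (Or.inr he'), hrest⟩
  · have heG₁ : e ∈ G₁.edgeSet :=
      ((hG₂ ▸ hM₂.subset_edgeSet he₂ : e ∈ insert s(a, b) G₁.edgeSet)).resolve_left he_ne
    obtain ⟨e', he', hrest⟩ := hM₂.exists_adj_lt_mem_diff hM₁ he₂ he₁ heG₁
    exact ⟨e', Set.mem_symmDiff.2 (Or.inl he'), hrest⟩

/-- If `G₂` is obtained from `G₁` by adding a single edge `e* = s(a,b)` and the greedy
matching `M₂` of `G₂` contains `e*`, then `e*` lies in the symmetric difference `M₁ ∆ M₂`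
of the two greedy matchings, and in the graph `H` on `V` whose edge set is `M₁ ∆ M₂`,
every endpoint of every edge is connected to the endpoint `a` of `e*`; i.e. all edges of
`H` lie in the single connected component of `H` containing the endpoints of `e*`. -/
theorem greedyMatching_symmDiff_single_component {V : Type*} [Fintype V]
    (G₁ G₂ : SimpleGraph V) (a b : V) (hab : a ≠ b)
    (hne : s(a, b) ∉ G₁.edgeSet)
    (hG₂ : G₂.edgeSet = insert s(a, b) G₁.edgeSet)
    (π : Sym2 V → ℝ)
    (hπ : ∀ e₁ e₂ : Sym2 V, ¬e₁.IsDiag → ¬e₂.IsDiag → π e₁ = π e₂ → e₁ = e₂)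
    (M₁ M₂ : Set (Sym2 V))
    (hM₁ : IsGreedyMatching G₁ π M₁) (hM₂ : IsGreedyMatching G₂ π M₂)
    (hstar : s(a, b) ∈ M₂) :
    s(a, b) ∈ symmDiff M₁ M₂ ∧
      ∀ e ∈ symmDiff M₁ M₂, ∀ v ∈ e,
        (SimpleGraph.fromEdgeSet (symmDiff M₁ M₂)).Reachable v a :=
  greedyMatching_symmDiff_single_component_general G₁ G₂ a b hne hG₂ π M₁ M₂ hM₁ hM₂ hstar
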